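/- There is a constant C > 0 such that, for every even k > 2, every ξ ∈ {-1,1}, every non-root non-leaf vertex v of a perfect k-ary tree T with uniformly random initial opinions, and every integer t ≥ 2, the probability that v is (≤ t)-stable with ξ_t(v) = ξ is at least 2^{-Ctk}. -/

import Mathlib

open SimpleGraph Set

variable {V : Type*}

/-- The majority-dynamics process generated by the initial opinion vector `σ`:
`ξ (t+1) v` is the sign of the sum of the opinions `ξ t` over the neighbours of `v`. -/
noncomputable def dyn (G : SimpleGraph V) (σ : V → ℤ) : ℕ → V → ℤ
  | 0 => σ
  | t + 1 => fun v => if 0 < ∑ᶠ u ∈ G.neighborSet v, dyn G σ t u then 1 else -1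

/-- `σ` is a valid vector of opinions, i.e. takes values in `{-1, 1}`. -/
def PM (σ : V → ℤ) : Prop := ∀ v, σ v = 1 ∨ σ v = -1

/-- The degree of a vertex. -/
noncomputable def degree' (G : SimpleGraph V) (v : V) : ℕ := (G.neighborSet v).ncard

/-- A leaf is a vertex of degree 1. -/
def IsLeaf (G : SimpleGraph V) (v : V) : Prop := degree' G v = 1

/-- The number of neighbours of `v` that are leaves. -/
noncomputable def leafNbrs (G : SimpleGraph V) (v : V) : ℕ := {u | G.Adj v u ∧ IsLeaf G u}.ncard

/-- All degrees of `G` are odd. -/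
def OddDegrees (G : SimpleGraph V) : Prop := ∀ v, Odd (degree' G v)

/-- `v` is `t`-stable for the process `ξ`. -/
def Stable (ξ : ℕ → V → ℤ) (v : V) (t : ℕ) : Prop :=
  ∀ s, t ≤ s → s % 2 = t % 2 → ξ (s + 2) v = ξ s v

/-- `G` is a perfect `k`-ary tree of height `h` rooted at `R`. -/
noncomputable def IsPerfectKAry (G : SimpleGraph V) (R : V) (k h : ℕ) : Prop :=
  G.IsTree ∧ (∀ v, degree' G v = 1 ∨ degree' G v = k + 1) ∧
    (∀ v, degree' G v = 1 → G.dist R v = h) ∧ degree' G R = k + 1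

/-- The set of descendants of `v` (including `v`) in the tree rooted at `R`:
those vertices `u` such that `v` lies on the (unique) geodesic from `R` to `u`. -/
noncomputable def desc (G : SimpleGraph V) (R v : V) : Set V :=
  {u | G.dist R u = G.dist R v + G.dist v u}

/-- `p` is the parent of `c` in the tree rooted at `R`. -/
noncomputable def IsParent (G : SimpleGraph V) (R p c : V) : Prop :=
  G.Adj p c ∧ G.dist R p + 1 = G.dist R c

/-- `v` is weakly `t`-stable for the process `ξ` (in the tree rooted at `R`): there is a
vector of initial opinions agreeing with `ξ t` on the subtree of descendants of `v` for
which `v` is 0-stable. -/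
noncomputable def WeaklyStable (G : SimpleGraph V) (R : V) (ξ : ℕ → V → ℤ) (v : V)
    (t : ℕ) : Prop :=
  ∃ σ' : V → ℤ, PM σ' ∧ (∀ w ∈ desc G R v, σ' w = ξ t w) ∧
    ∀ s, s % 2 = 0 → dyn G σ' (s + 2) v = dyn G σ' s v

/-- Translation of boolean labels into `±1` opinions. -/
def signify (b : V → Bool) : V → ℤ := fun v => if b v then 1 else -1

/-- `v` is `(≤ t)`-stable w.r.t. `σ`: for every initial opinion vector agreeing with `σ`
on the subtree of descendants of `v`, the opinion of `v` at every time `t' < t` of the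
same parity as `t` coincides with its opinion at time `t`. -/
noncomputable def LeStable (G : SimpleGraph V) (R : V) (σ : V → ℤ) (v : V)
    (t : ℕ) : Prop :=
  ∀ σ' : V → ℤ, PM σ' → (∀ w ∈ desc G R v, σ' w = σ w) →
    ∀ t' < t, t' % 2 = t % 2 → dyn G σ' t' v = dyn G σ' t v

/-!
Let `pat s w = ε (-1) ^ (d(R, w) + s)` be the alternating pattern with `pat t v = ξ`, and run the
dynamics on the subtree `T_v` with every vertex outside it clamped to `pat`. Identify a
configuration with the set of vertices where it initially agrees with `pat`. The `1 + t k` events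
"`v` follows `pat` at time `0`" and "the child `c` of `v` follows `pat` at time `s < t`" are then
increasing, since the clamped dynamics is monotone along an alternating pattern, and each has
probability at least `1/2`, since flipping all opinions commutes with the dynamics (degrees are odd)
and maps the complement of an event into it. By Harris–Kleitman all of them hold with probability at
least `2 ^ -(1 + t k)`. When they do, the `k ≥ 2` children outvote the parent of `v` at every step,
so whatever happens outside `T_v`, `v` follows `pat` up to time `t`; as `pat` has period `2`, `v` is
`(≤ t)`-stable with `ξ_t(v) = ξ`.
-/

open scoped Finset

namespace SimpleGraph

variable {G : SimpleGraph V} {R x y : V}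

lemma Reachable.exists_adj_dist_add_one_eq (hx : G.Reachable R x) (hxR : x ≠ R) :
    ∃ p, G.Adj p x ∧ G.dist R p + 1 = G.dist R x := by
  obtain ⟨q, -, hq⟩ := hx.symm.exists_path_of_dist
  cases q with
  | nil => exact absurd rfl hxR
  | @cons _ p _ hxp q =>
    refine ⟨p, hxp.symm, ?_⟩
    have hle : G.dist p R ≤ q.length := dist_le q
    rw [Walk.length_cons, dist_comm] at hq
    rcases hxp.symm.diff_dist_adj (u := R) with h | h | h <;> rw [dist_comm] at hle <;> omega

lemma IsAcyclic.eq_of_adj_of_dist_add_one_eq (hG : G.IsAcyclic) {p q : V}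
    (hp : G.Adj p x) (hq : G.Adj q x)
    (hpx : G.dist R p + 1 = G.dist R x) (hqx : G.dist R q + 1 = G.dist R x) : p = q := by
  classical
  have geodesic_concat : ∀ a, ∀ ha : G.Adj a x, G.dist R a + 1 = G.dist R x →
      ∃ P : G.Walk R a, (P.concat ha).IsPath := by
    intro a ha hax
    have hRx : G.Reachable R x := Reachable.of_dist_ne_zero (by omega)
    obtain ⟨P, hP, hPl⟩ := (hRx.trans ha.symm.reachable).exists_path_of_dist
    refine ⟨P, hP.concat (fun hxP => ?_) ha⟩
    have := dist_le (P.takeUntil x hxP)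
    have := P.length_takeUntil_le_length hxP
    omega
  obtain ⟨P, hP⟩ := geodesic_concat p hp hpx
  obtain ⟨Q, hQ⟩ := geodesic_concat q hq hqx
  have hPQ := congrArg Subtype.val ((hG.subsingleton_path R x).elim ⟨_, hP⟩ ⟨_, hQ⟩)
  exact (Walk.concat_inj hPQ).1

lemma mem_desc_self (v : V) : v ∈ desc G R v := by
  simp [desc]

lemma Connected.mem_desc_of_adj_of_dist_eq_add_one (hG : G.Connected) {v : V}
    (hx : x ∈ desc G R v) (hxy : G.Adj x y) (hy : G.dist R y = G.dist R x + 1) :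
    y ∈ desc G R v := by
  have h₁ : G.dist v y ≤ G.dist v x + G.dist x y := hG.dist_triangle
  have h₂ : G.dist R y ≤ G.dist R v + G.dist v y := hG.dist_triangle
  rw [dist_eq_one_iff_adj.2 hxy] at h₁
  simp only [desc, Set.mem_ofPred_eq] at hx ⊢
  omega

/-- Below `v` the parent of a descendant `x ≠ v` is the first step of the geodesic from `x`
to `v`, which is again a descendant. -/
lemma IsTree.mem_desc_of_adj_of_ne (hT : G.IsTree) {v : V} (hx : x ∈ desc G R v) (hxv : x ≠ v)
    (hxy : G.Adj x y) : y ∈ desc G R v := by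
  rcases hT.dist_eq_dist_add_one_of_adj R hxy with hyx | hxy'
  swap
  · exact hT.connected.mem_desc_of_adj_of_dist_eq_add_one hx hxy hxy'
  obtain ⟨w, hwx, hw⟩ := (hT.connected v x).exists_adj_dist_add_one_eq hxv
  have h₁ : G.dist R w ≤ G.dist R v + G.dist v w := hT.connected.dist_triangle
  have h₂ : G.dist R x ≤ G.dist R w + G.dist w x := hT.connected.dist_triangle
  rw [dist_eq_one_iff_adj.2 hwx] at h₂
  simp only [desc, Set.mem_ofPred_eq] at hx ⊢
  have hwy : w = y := hT.isAcyclic.eq_of_adj_of_dist_add_one_eq hwx hxy.symm (by omega) hyx.symm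
  subst hwy
  omega

end SimpleGraph

lemma eq_of_one_le_mul {p y : ℤ} (hp : p = 1 ∨ p = -1) (hy : y = 1 ∨ y = -1) (h : 1 ≤ p * y) :
    y = p := by
  rcases hp with rfl | rfl <;> rcases hy with rfl | rfl <;> omega

lemma mul_self_of_pm {p : ℤ} (hp : p = 1 ∨ p = -1) : p * p = 1 := by
  rcases hp with rfl | rfl <;> rfl

lemma Finset.sum_ne_zero_of_pm_of_odd_card {ι : Type*} {s : Finset ι} {f : ι → ℤ}
    (hf : ∀ i ∈ s, f i = 1 ∨ f i = -1) (hs : Odd #s) : ∑ i ∈ s, f i ≠ 0 := by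
  have heven : Even (∑ i ∈ s, (f i - 1)) :=
    Finset.even_sum _ fun i hi => by rcases hf i hi with h | h <;> simp [h]
  rw [Finset.sum_sub_distrib, Finset.sum_const, nsmul_one] at heven
  intro h
  rw [h, zero_sub, even_neg] at heven
  exact Int.not_even_iff_odd.2 (by exact_mod_cast hs) heven

def majority (a : ℤ) : ℤ := if 0 < a then 1 else -1

lemma majority_pm (a : ℤ) : majority a = 1 ∨ majority a = -1 := by
  unfold majority; split_ifs <;> simp

lemma mul_majority_le_mul_majority {e a b : ℤ} (he : e = 1 ∨ e = -1) (h : e * a ≤ e * b) :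
    e * majority a ≤ e * majority b := by
  unfold majority; rcases he with rfl | rfl <;> split_ifs <;> omega

lemma majority_neg {a : ℤ} (ha : a ≠ 0) : majority (-a) = -majority a := by
  unfold majority; split_ifs <;> omega

lemma majority_add_nsmul {x e : ℤ} {k : ℕ} (hx : x = 1 ∨ x = -1) (he : e = 1 ∨ e = -1)
    (hk : 2 ≤ k) : majority (x + k • e) = e := by
  unfold majority; rcases hx with rfl | rfl <;> rcases he with rfl | rfl <;> simp <;> omega

section Dynamics

variable {G : SimpleGraph V}

lemma dyn_succ [G.LocallyFinite] (σ : V → ℤ) (s : ℕ) (w : V) :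
    dyn G σ (s + 1) w = majority (∑ u ∈ G.neighborFinset w, dyn G σ s u) := by
  rw [← finsum_mem_coe_finset, SimpleGraph.coe_neighborFinset]
  rfl

lemma dyn_pm [G.LocallyFinite] {σ : V → ℤ} (hσ : PM σ) : ∀ s, PM (dyn G σ s)
  | 0 => hσ
  | s + 1 => fun w => by rw [dyn_succ]; exact majority_pm _

open Classical in
noncomputable def clampDyn (G : SimpleGraph V) (D : Set V) (β : ℕ → V → ℤ) (σ : V → ℤ) :
    ℕ → V → ℤ
  | 0 => fun w => if w ∈ D then σ w else β 0 w
  | s + 1 => fun w =>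
      if w ∈ D then majority (∑ᶠ u ∈ G.neighborSet w, clampDyn G D β σ s u) else β (s + 1) w

variable {D : Set V} {β β' : ℕ → V → ℤ} {σ σ' : V → ℤ} {w : V}

lemma clampDyn_of_notMem (hw : w ∉ D) (s : ℕ) : clampDyn G D β σ s w = β s w := by
  cases s <;> simp [clampDyn, hw]

lemma clampDyn_zero_of_mem (hw : w ∈ D) : clampDyn G D β σ 0 w = σ w := by
  simp [clampDyn, hw]

lemma clampDyn_succ_of_mem [G.LocallyFinite] (hw : w ∈ D) (s : ℕ) :
    clampDyn G D β σ (s + 1) w = majority (∑ u ∈ G.neighborFinset w, clampDyn G D β σ s u) := by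
  rw [← finsum_mem_coe_finset, SimpleGraph.coe_neighborFinset]
  simp [clampDyn, hw]

lemma clampDyn_pm [G.LocallyFinite] (hβ : ∀ s, PM (β s)) (hσ : PM σ) (s : ℕ) :
    PM (clampDyn G D β σ s) := by
  intro w
  by_cases hw : w ∈ D
  · cases s with
    | zero => rw [clampDyn_zero_of_mem hw]; exact hσ w
    | succ s => rw [clampDyn_succ_of_mem hw]; exact majority_pm _
  · rw [clampDyn_of_notMem hw]; exact hβ s w

/-- No vertex of `D` sees a tie, since its degree is odd. -/
lemma clampDyn_neg [G.LocallyFinite] (hodd : ∀ w ∈ D, Odd (G.degree w)) (hβ : ∀ s, PM (β s))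
    (hσ : PM σ) :
    ∀ s, clampDyn G D (-β) (-σ) s = -clampDyn G D β σ s := by
  intro s
  induction s with
  | zero =>
    funext w
    by_cases hw : w ∈ D
    · simp [clampDyn_zero_of_mem hw]
    · simp [clampDyn_of_notMem hw]
  | succ s ih =>
    funext w
    by_cases hw : w ∈ D
    · have hsum := Finset.sum_ne_zero_of_pm_of_odd_card (s := G.neighborFinset w)
        (fun u _ => clampDyn_pm (G := G) (D := D) hβ hσ s u)
        (by rw [G.card_neighborFinset_eq_degree]; exact hodd w hw)
      simp only [clampDyn_succ_of_mem hw, ih, Pi.neg_apply, Finset.sum_neg_distrib,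
        majority_neg hsum]
    · simp [clampDyn_of_notMem hw]

end Dynamics

/-- For instance the majority dynamics started from a proper 2-colouring of a bipartite graph. -/
structure IsAlternatingPattern (G : SimpleGraph V) (pat : ℕ → V → ℤ) : Prop where
  pm : ∀ s, PM (pat s)
  adj : ∀ ⦃x y⦄, G.Adj x y → ∀ s, pat s y = pat (s + 1) x

section Monotone

variable {G : SimpleGraph V} [G.LocallyFinite] {D : Set V} {pat β β' : ℕ → V → ℤ}
  {σ σ' : V → ℤ}

/-- All neighbours `u` of `w` compare opinions in the same direction, since
`pat s u = pat (s + 1) w`. -/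
lemma clampDyn_mono (hpat : IsAlternatingPattern G pat)
    (hβ : ∀ s, ∀ w ∉ D, pat s w * β s w ≤ pat s w * β' s w)
    (hσ : ∀ w ∈ D, pat 0 w * σ w ≤ pat 0 w * σ' w) (s : ℕ) (w : V) :
    pat s w * clampDyn G D β σ s w ≤ pat s w * clampDyn G D β' σ' s w := by
  induction s generalizing w with
  | zero =>
    by_cases hw : w ∈ D
    · simpa only [clampDyn_zero_of_mem hw] using hσ w hw
    · simpa only [clampDyn_of_notMem hw] using hβ 0 w hw
  | succ s ih =>
    by_cases hw : w ∈ D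
    · rw [clampDyn_succ_of_mem hw, clampDyn_succ_of_mem hw]
      refine mul_majority_le_mul_majority (hpat.pm _ w) ?_
      rw [Finset.mul_sum, Finset.mul_sum]
      refine Finset.sum_le_sum fun u hu => ?_
      rw [← hpat.adj ((G.mem_neighborFinset w u).1 hu)]
      exact ih u
    · simpa only [clampDyn_of_notMem hw] using hβ (s + 1) w hw

end Monotone

def twist [DecidableEq V] (ρ : V → ℤ) (S : Finset V) : V → ℤ :=
  fun w => if w ∈ S then ρ w else -ρ w

section Twist

variable [DecidableEq V] {ρ : V → ℤ}

lemma twist_pm (hρ : PM ρ) (S : Finset V) : PM (twist ρ S) := by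
  intro w
  unfold twist
  rcases hρ w with h | h <;> split_ifs <;> simp [h]

lemma mul_twist (hρ : PM ρ) (S : Finset V) (w : V) :
    ρ w * twist ρ S w = if w ∈ S then 1 else -1 := by
  unfold twist
  split_ifs <;> simp [mul_self_of_pm (hρ w)]

lemma twist_compl [Fintype V] (S : Finset V) : twist ρ Sᶜ = -twist ρ S := by
  funext w
  by_cases hw : w ∈ S <;> simp [twist, hw]

lemma twist_injective (hρ : PM ρ) : Function.Injective (twist ρ) := by
  intro S S' h
  ext w
  have := congrFun h w
  rw [← mul_right_inj' (show ρ w ≠ 0 by rcases hρ w with h | h <;> simp [h]), mul_twist hρ,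
    mul_twist hρ] at this
  split_ifs at this <;> simp_all

end Twist

/-- A configuration is encoded by the set `S` of vertices where it initially agrees with `pat`. -/
noncomputable def alignedEvent [Fintype V] [DecidableEq V] (G : SimpleGraph V) (D : Set V)
    (pat : ℕ → V → ℤ) (s : ℕ) (c : V) : Finset (Finset V) :=
  {S | clampDyn G D pat (twist (pat 0) S) s c = pat s c}

section AlignedEvent

variable [Fintype V] [DecidableEq V] {G : SimpleGraph V} [G.LocallyFinite] {D : Set V}
  {pat : ℕ → V → ℤ}

lemma isUpperSet_alignedEvent (hpat : IsAlternatingPattern G pat) (s : ℕ) (c : V) :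
    IsUpperSet (alignedEvent G D pat s c : Set (Finset V)) := by
  intro S S' hSS' hS
  simp only [alignedEvent, Finset.coe_filter, Finset.mem_univ, true_and, Set.mem_ofPred_eq]
    at hS ⊢
  have hmono := clampDyn_mono (D := D) (β := pat) (β' := pat) (σ := twist (pat 0) S)
    (σ' := twist (pat 0) S') hpat
    (fun _ _ _ => le_rfl) (fun w _ => by
      rw [mul_twist (hpat.pm 0), mul_twist (hpat.pm 0)]
      by_cases hw : w ∈ S
      · simp [hw, hSS' hw]
      · split_ifs <;> simp) s c
  rw [hS, mul_self_of_pm (hpat.pm s c)] at hmono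
  exact eq_of_one_le_mul (hpat.pm s c) (clampDyn_pm hpat.pm (twist_pm (hpat.pm 0) _) s c) hmono

lemma two_pow_card_le_two_mul_card_of_compl_mem {α : Type*} [Fintype α] [DecidableEq α]
    {𝒜 : Finset (Finset α)} (h : ∀ S ∉ 𝒜, Sᶜ ∈ 𝒜) : 2 ^ Fintype.card α ≤ 2 * #𝒜 := by
  have hcompl : #𝒜ᶜ ≤ #𝒜 :=
    Finset.card_le_card_of_injOn compl (fun S hS => h S (by simpa using hS))
      compl_injective.injOn
  have := Finset.card_add_card_compl 𝒜
  rw [Fintype.card_finset] at this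
  omega

/-- If `c` misses the pattern from `S`, flipping every opinion and the boundary makes it hit
the pattern from `Sᶜ`, and restoring the boundary to `pat` only helps. -/
lemma two_pow_card_le_two_mul_card_alignedEvent (hpat : IsAlternatingPattern G pat)
    (hodd : ∀ w ∈ D, Odd (G.degree w)) (s : ℕ) (c : V) :
    2 ^ Fintype.card V ≤ 2 * #(alignedEvent G D pat s c) := by
  refine two_pow_card_le_two_mul_card_of_compl_mem fun S hS => ?_
  simp only [alignedEvent, Finset.mem_filter, Finset.mem_univ, true_and] at hS ⊢
  have hσ := twist_pm (hpat.pm 0) S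
  have hflip : clampDyn G D (-pat) (twist (pat 0) Sᶜ) s c = pat s c := by
    rw [twist_compl, clampDyn_neg hodd hpat.pm hσ, Pi.neg_apply]
    rcases clampDyn_pm (G := G) (D := D) hpat.pm hσ s c with h | h <;>
      rcases hpat.pm s c with h' | h' <;> simp_all
  have hmono := clampDyn_mono (D := D) (β := -pat) (β' := pat) (σ := twist (pat 0) Sᶜ)
    (σ' := twist (pat 0) Sᶜ) hpat
    (fun s w _ => by simp only [Pi.neg_apply, mul_neg, mul_self_of_pm (hpat.pm s w)]; omega)
    (fun _ _ => le_rfl) s c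
  rw [hflip, mul_self_of_pm (hpat.pm s c)] at hmono
  exact eq_of_one_le_mul (hpat.pm s c) (clampDyn_pm hpat.pm (twist_pm (hpat.pm 0) _) s c) hmono

end AlignedEvent

/-- Harris–Kleitman, iterated. -/
lemma two_pow_card_le_two_pow_card_mul_card_filter {α ι : Type*} [Fintype α] [DecidableEq α]
    [DecidableEq ι] (J : Finset ι) (E : ι → Finset (Finset α))
    (hup : ∀ i ∈ J, IsUpperSet (E i : Set (Finset α)))
    (hhalf : ∀ i ∈ J, 2 ^ Fintype.card α ≤ 2 * #(E i)) :
    2 ^ Fintype.card α ≤ 2 ^ #J * #{S | ∀ i ∈ J, S ∈ E i} := by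
  induction J using Finset.induction_on with
  | empty => simp [Fintype.card_finset]
  | @insert a J ha ih =>
    set I : Finset (Finset α) := {S | ∀ i ∈ J, S ∈ E i}
    have hI : IsUpperSet (I : Set (Finset α)) := fun S S' hSS' hS => by
      simp only [I, Finset.coe_filter, Finset.mem_univ, true_and, Set.mem_ofPred_eq] at hS ⊢
      exact fun i hi => hup i (Finset.mem_insert_of_mem hi) hSS' (hS i hi)
    have hinter : ({S | ∀ i ∈ insert a J, S ∈ E i} : Finset (Finset α)) = E a ∩ I := by
      ext S; simp [I]
    have hharris := (hup a (Finset.mem_insert_self a J)).le_card_inter_finset hI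
    have hA := hhalf a (Finset.mem_insert_self a J)
    have hIJ := ih (fun i hi => hup i (Finset.mem_insert_of_mem hi))
      (fun i hi => hhalf i (Finset.mem_insert_of_mem hi))
    have hhalve : #I ≤ 2 * #(E a ∩ I) := by
      refine Nat.le_of_mul_le_mul_left ?_ (pow_pos two_pos (Fintype.card α))
      calc 2 ^ Fintype.card α * #I ≤ 2 * #(E a) * #I := Nat.mul_le_mul_right _ hA
        _ = 2 * (#(E a) * #I) := mul_assoc ..
        _ ≤ 2 * (2 ^ Fintype.card α * #(E a ∩ I)) := Nat.mul_le_mul_left _ hharris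
        _ = 2 ^ Fintype.card α * (2 * #(E a ∩ I)) := by ring
    rw [hinter, Finset.card_insert_of_notMem ha, pow_succ]
    calc 2 ^ Fintype.card α ≤ 2 ^ #J * #I := hIJ
      _ ≤ 2 ^ #J * 2 * #(E a ∩ I) := by rw [mul_assoc]; exact Nat.mul_le_mul_left _ hhalve

section Transfer

variable [DecidableEq V] {G : SimpleGraph V} [G.LocallyFinite] {D : Set V} {pat : ℕ → V → ℤ}
  {σ σ' : V → ℤ} {v p : V} {CH : Finset V} {t : ℕ}

lemma majority_sum_insert_eq {f : V → ℤ} {e : ℤ} (hp : p ∉ CH) (hk : 2 ≤ #CH)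
    (hfp : f p = 1 ∨ f p = -1) (he : e = 1 ∨ e = -1) (hf : ∀ c ∈ CH, f c = e) :
    majority (∑ u ∈ insert p CH, f u) = e := by
  rw [Finset.sum_insert hp, Finset.sum_congr rfl hf, Finset.sum_const]
  exact majority_add_nsmul hfp he hk

/-- While the children of `v` follow the pattern they outvote the parent of `v`, so the true
dynamics on `D` cannot tell that only the clamped one sees the pattern outside `D`. -/
lemma dyn_eq_clampDyn_of_children_aligned (hpat : IsAlternatingPattern G pat) (hσ : PM σ)
    (hσ' : PM σ') (hagree : ∀ w ∈ D, σ' w = σ w)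
    (hclosed : ∀ w ∈ D, w ≠ v → ∀ u, G.Adj w u → u ∈ D)
    (hN : G.neighborFinset v = insert p CH) (hp : p ∉ CH) (hCH : ∀ c ∈ CH, c ∈ D)
    (hk : 2 ≤ #CH) (haligned : ∀ s < t, ∀ c ∈ CH, clampDyn G D pat σ s c = pat s c) :
    ∀ s ≤ t, ∀ w ∈ D, dyn G σ' s w = clampDyn G D pat σ s w := by
  intro s
  induction s with
  | zero => intro _ w hw; rw [clampDyn_zero_of_mem hw]; exact hagree w hw
  | succ s ih =>
    intro hs w hw
    replace ih := ih (by omega)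
    rw [dyn_succ, clampDyn_succ_of_mem hw]
    by_cases hwv : w = v
    · subst hwv
      have hchildren : ∀ c ∈ CH, clampDyn G D pat σ s c = pat (s + 1) w := fun c hc => by
        rw [haligned s (by omega) c hc,
          hpat.adj ((G.mem_neighborFinset w c).1 (hN ▸ Finset.mem_insert_of_mem hc))]
      rw [hN, majority_sum_insert_eq hp hk (dyn_pm hσ' s p) (hpat.pm _ w)
          fun c hc => (ih c (hCH c hc)).trans (hchildren c hc),
        majority_sum_insert_eq hp hk (clampDyn_pm hpat.pm hσ s p) (hpat.pm _ w) hchildren]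
    · exact congrArg majority <| Finset.sum_congr rfl fun u hu =>
        ih u (hclosed w hw hwv u ((G.mem_neighborFinset w u).1 hu))

lemma dyn_eq_pat_of_children_aligned (hpat : IsAlternatingPattern G pat) (hσ : PM σ)
    (hσ' : PM σ') (hagree : ∀ w ∈ D, σ' w = σ w)
    (hclosed : ∀ w ∈ D, w ≠ v → ∀ u, G.Adj w u → u ∈ D)
    (hN : G.neighborFinset v = insert p CH) (hp : p ∉ CH) (hCH : ∀ c ∈ CH, c ∈ D)
    (hk : 2 ≤ #CH) (hvD : v ∈ D) (hv : σ v = pat 0 v)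
    (haligned : ∀ s < t, ∀ c ∈ CH, clampDyn G D pat σ s c = pat s c) :
    ∀ s ≤ t, dyn G σ' s v = pat s v
  | 0, _ => (hagree v hvD).trans hv
  | s + 1, hs => by
    rw [dyn_succ, hN]
    refine majority_sum_insert_eq hp hk (dyn_pm hσ' s p) (hpat.pm _ v) fun c hc => ?_
    rw [dyn_eq_clampDyn_of_children_aligned hpat hσ hσ' hagree hclosed hN hp hCH hk haligned s
        (by omega) c (hCH c hc), haligned s (by omega) c hc,
      hpat.adj ((G.mem_neighborFinset v c).1 (hN ▸ Finset.mem_insert_of_mem hc))]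

end Transfer

/-- `𝒜` is the intersection of the `1 + t k` aligned events of `v` at time `0` and of each child
of `v` at each time `s < t`. -/
lemma SimpleGraph.IsTree.exists_forcing_family [Fintype V] [DecidableEq V] {G : SimpleGraph V}
    [DecidableRel G.Adj] (hT : G.IsTree) (hodd : ∀ w, Odd (G.degree w)) {pat : ℕ → V → ℤ}
    (hpat : IsAlternatingPattern G pat) {R v : V} (hvR : v ≠ R) {k : ℕ}
    (hdeg : G.degree v = k + 1) (hk : 2 ≤ k) (t : ℕ) :
    ∃ 𝒜 : Finset (Finset V), 2 ^ Fintype.card V ≤ 2 ^ (1 + t * k) * #𝒜 ∧ ∀ S ∈ 𝒜, ∀ σ', PM σ' →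
      (∀ w ∈ desc G R v, σ' w = twist (pat 0) S w) → ∀ s ≤ t, dyn G σ' s v = pat s v := by
  obtain ⟨p, hpv, hpd⟩ := (hT.connected R v).exists_adj_dist_add_one_eq hvR
  have hpN : p ∈ G.neighborFinset v := (G.mem_neighborFinset v p).2 hpv.symm
  set CH := (G.neighborFinset v).erase p
  have hCH : #CH = k := by
    rw [Finset.card_erase_of_mem hpN, G.card_neighborFinset_eq_degree, hdeg, Nat.add_sub_cancel]
  have hchild : ∀ c ∈ CH, c ∈ desc G R v := by
    intro c hc
    obtain ⟨hcp, hcN⟩ := Finset.mem_erase.1 hc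
    have hvc := (G.mem_neighborFinset v c).1 hcN
    refine hT.connected.mem_desc_of_adj_of_dist_eq_add_one (mem_desc_self v) hvc ?_
    refine (hT.dist_eq_dist_add_one_of_adj R hvc).resolve_left fun h => hcp ?_
    exact hT.isAcyclic.eq_of_adj_of_dist_add_one_eq hvc.symm hpv h.symm hpd
  set J := insert (0, v) (Finset.range t ×ˢ CH)
  have hJ : #J ≤ 1 + t * k := by
    grw [Finset.card_insert_le, Finset.card_product, Finset.card_range, hCH, add_comm]
  refine ⟨({S | ∀ i ∈ J, S ∈ alignedEvent G (desc G R v) pat i.1 i.2} : Finset _), ?_, ?_⟩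
  · grw [two_pow_card_le_two_pow_card_mul_card_filter J _
      (fun i _ => isUpperSet_alignedEvent hpat _ _)
      (fun i _ => two_pow_card_le_two_mul_card_alignedEvent hpat (fun w _ => hodd w) _ _), hJ]
    exact one_le_two
  intro S hS σ' hσ' hagree
  simp only [Finset.mem_filter, Finset.mem_univ, true_and, alignedEvent] at hS
  refine dyn_eq_pat_of_children_aligned hpat (twist_pm (hpat.pm 0) S) hσ' hagree
    (fun w hw hwv u hwu => hT.mem_desc_of_adj_of_ne hw hwv hwu) (Finset.insert_erase hpN).symm
    (Finset.notMem_erase p _) hchild (hCH ▸ hk) (mem_desc_self v) ?_ ?_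
  · simpa only [clampDyn_zero_of_mem (mem_desc_self v)] using hS _ (Finset.mem_insert_self _ _)
  · exact fun s hs c hc =>
      hS (s, c) (Finset.mem_insert_of_mem (Finset.mem_product.2 ⟨Finset.mem_range.2 hs, hc⟩))

noncomputable def altPattern (G : SimpleGraph V) (R v : V) (t : ℕ) (ξ : ℤ) : ℕ → V → ℤ :=
  fun s w => ξ * (-1) ^ (G.dist R w + s + (G.dist R v + t))

section AltPattern

variable {G : SimpleGraph V} {R v : V} {t : ℕ} {ξ : ℤ}

lemma altPattern_self : altPattern G R v t ξ t v = ξ := by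
  simp [altPattern, ← two_mul, pow_mul]

lemma altPattern_eq_of_mod_two_eq {s s' : ℕ} (w : V) (h : s % 2 = s' % 2) :
    altPattern G R v t ξ s w = altPattern G R v t ξ s' w := by
  simp only [altPattern, pow_add, neg_one_pow_eq_pow_mod_two (n := s), h,
    ← neg_one_pow_eq_pow_mod_two]

lemma SimpleGraph.IsTree.isAlternatingPattern_altPattern (hT : G.IsTree) (hξ : ξ = 1 ∨ ξ = -1) :
    IsAlternatingPattern G (altPattern G R v t ξ) where
  pm s w := by
    rcases hξ with rfl | rfl <;> rcases neg_one_pow_eq_or ℤ (G.dist R w + s + (G.dist R v + t))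
      with h | h <;> simp [altPattern, h]
  adj x y hxy s := by
    simp only [altPattern]
    rcases hT.dist_eq_dist_add_one_of_adj R hxy with h | h <;> rw [h]
    · rw [show G.dist R y + 1 + (s + 1) = G.dist R y + s + 2 by ring, add_right_comm _ 2,
        pow_add _ _ 2, neg_one_sq, mul_one]
    · ring_nf

end AltPattern

lemma degree'_eq_degree (G : SimpleGraph V) (v : V) [Fintype (G.neighborSet v)] :
    degree' G v = G.degree v := by
  rw [degree', Set.ncard_eq_toFinset_card', ← SimpleGraph.card_neighborFinset_eq_degree]
  rfl

namespace IsPerfectKAry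

variable [Fintype V] {G : SimpleGraph V} [DecidableRel G.Adj] {R : V} {k h : ℕ}

lemma odd_degree (hG : IsPerfectKAry G R k h) (hk : Even k) (w : V) : Odd (G.degree w) := by
  rcases hG.2.1 w with hw | hw <;> rw [← degree'_eq_degree, hw]
  exacts [odd_one, hk.add_one]

lemma degree_eq_of_not_isLeaf (hG : IsPerfectKAry G R k h) {v : V} (hv : ¬IsLeaf G v) :
    G.degree v = k + 1 := by
  rw [← degree'_eq_degree]
  exact (hG.2.1 v).resolve_left hv

end IsPerfectKAry

lemma card_le_ncard_signify [Finite V] [DecidableEq V] {ρ : V → ℤ} (hρ : PM ρ)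
    {𝒜 : Finset (Finset V)} {P : (V → ℤ) → Prop} (h : ∀ S ∈ 𝒜, P (twist ρ S)) :
    #𝒜 ≤ {b : V → Bool | P (signify b)}.ncard := by
  set Ψ : Finset V → V → Bool := fun S w => decide (twist ρ S w = 1)
  have hΨ : ∀ S, signify (Ψ S) = twist ρ S := fun S => funext fun w => by
    rcases twist_pm hρ S w with h | h <;> simp [signify, Ψ, h]
  have hinj : Function.Injective Ψ := fun S S' hSS' =>
    twist_injective hρ (by rw [← hΨ, ← hΨ, hSS'])
  calc #𝒜 = (Ψ '' 𝒜).ncard := by rw [Set.ncard_image_of_injective _ hinj, Set.ncard_coe_finset]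
    _ ≤ _ := Set.ncard_le_ncard (by rintro _ ⟨S, hS, rfl⟩; simpa [hΨ] using h S hS)
      (Set.toFinite _)

lemma two_rpow_neg_mul_le {n m N : ℕ} (hm : 1 ≤ m) (h : 2 ^ n ≤ 2 ^ (1 + m) * N) :
    (2 : ℝ) ^ (-(2 * m : ℝ)) * 2 ^ n ≤ N := by
  have hexp : (2 : ℝ) ^ (-(2 * m : ℝ)) * 2 ^ (1 + m) ≤ 1 := by
    rw [← Real.rpow_natCast, ← Real.rpow_add two_pos]
    refine Real.rpow_le_one_of_one_le_of_nonpos one_le_two ?_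
    have : (1 : ℝ) ≤ m := by exact_mod_cast hm
    push_cast
    linarith
  calc (2 : ℝ) ^ (-(2 * m : ℝ)) * 2 ^ n ≤ 2 ^ (-(2 * m : ℝ)) * (2 ^ (1 + m) * N) := by
        gcongr; exact_mod_cast h
    _ = 2 ^ (-(2 * m : ℝ)) * 2 ^ (1 + m) * N := (mul_assoc ..).symm
    _ ≤ N := mul_le_of_le_one_left (Nat.cast_nonneg _) hexp

/-- There is a constant `C > 0` such that, for every even `k > 2`, every
opinion `ξ ∈ {-1,1}`, every non-root non-leaf vertex `v` of a perfect `k`-ary tree with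
uniformly random initial opinions, and every `t ≥ 2`, the probability that `v` is
`(≤ t)`-stable with `ξ_t(v) = ξ` is at least `2^{-Ctk}`. -/
theorem leStable_probability :
    ∃ C : ℝ, 0 < C ∧
      ∀ (V : Type) [Fintype V] (G : SimpleGraph V) (R : V) (k h : ℕ),
        Even k → 2 < k → IsPerfectKAry G R k h →
        ∀ ξv : ℤ, (ξv = 1 ∨ ξv = -1) → ∀ v : V, v ≠ R → ¬ IsLeaf G v →
        ∀ t : ℕ, 2 ≤ t →
        (2 : ℝ) ^ (-(C * t * k)) * 2 ^ Fintype.card V ≤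
          ({b : V → Bool |
            LeStable G R (signify b) v t ∧ dyn G (signify b) t v = ξv}.ncard : ℝ) := by
  refine ⟨2, two_pos, ?_⟩
  intro V _ G R k h hk hk2 hG ξv hξv v hvR hvL t ht
  classical
  have hpat := hG.1.isAlternatingPattern_altPattern (R := R) (v := v) (t := t) hξv
  obtain ⟨𝒜, hcard, hforce⟩ := hG.1.exists_forcing_family (hG.odd_degree hk) hpat hvR
    (hG.degree_eq_of_not_isLeaf hvL) (by omega) t
  have hcount := card_le_ncard_signify (hpat.pm 0) (𝒜 := 𝒜)
    (P := fun σ => LeStable G R σ v t ∧ dyn G σ t v = ξv) fun S hS =>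
    ⟨fun σ' hσ' hagree t' ht' hpar => by
      rw [hforce S hS σ' hσ' hagree t' ht'.le, hforce S hS σ' hσ' hagree t le_rfl]
      exact altPattern_eq_of_mod_two_eq v hpar,
    by rw [hforce S hS _ (twist_pm (hpat.pm 0) S) (fun _ _ => rfl) t le_rfl, altPattern_self]⟩
  have hmass := two_rpow_neg_mul_le (by nlinarith : 1 ≤ t * k)
    (hcard.trans (Nat.mul_le_mul_left _ hcount))
  push_cast at hmass
  rwa [← mul_assoc] at hmass
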